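/- For the Gaussian output model p(t|y) = ∏_i N(t_i|y_i(θ), σ²) with smooth y : ℝⁿ → ℝᵒ, the Levi-Civita connection of the Fisher metric satisfies Γ^μ_{αβ} = (1/σ²) Σ_{i=1}^o g^{μν} ∂_ν y_i ∂_α∂_β y_i, where g_{μν} = (1/σ²) Σ_i ∂_μ y_i ∂_ν y_i is assumed invertible. -/

import Mathlib

/-- Partial derivative of `f` with respect to coordinate `μ`. -/
noncomputable def pder {n : ℕ} (μ : Fin n) (f : (Fin n → ℝ) → ℝ) (θ : Fin n → ℝ) : ℝ :=
  fderiv ℝ f θ (Pi.single μ 1)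


private lemma pder_diff {n : ℕ} {f : (Fin n → ℝ) → ℝ} (hf : ContDiff ℝ (⊤ : ℕ∞) f) (κ : Fin n) :
    Differentiable ℝ (pder κ f) := by
  have h := (hf.fderiv_right (m := (⊤ : ℕ∞)) (by simp)).differentiable (by simp)
  exact fun x => (h x).clm_apply (differentiableAt_const _)

private lemma pder_symm {n : ℕ} {f : (Fin n → ℝ) → ℝ} (hf : ContDiff ℝ (⊤ : ℕ∞) f) (κ α : Fin n)
    (θ : Fin n → ℝ) : pder α (pder κ f) θ = pder κ (pder α f) θ := by
  have hsym := (hf.contDiffAt (x := θ)).isSymmSndFDerivAt (by rw [minSmoothness_of_isRCLikeNormedField]; exact le_trans (by norm_num : (2 : WithTop ℕ∞) ≤ ((2:ℕ∞) : WithTop ℕ∞)) (WithTop.coe_le_coe.mpr le_top))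
  have hd := (hf.fderiv_right (m := (⊤ : ℕ∞)) (by simp)).differentiable (by simp) θ
  unfold pder
  rw [fderiv_clm_apply hd (differentiableAt_const _),
      fderiv_clm_apply hd (differentiableAt_const _)]
  simp [hsym (Pi.single α 1) (Pi.single κ 1)]

private lemma pder_expand {n o : ℕ} (u v : Fin o → (Fin n → ℝ) → ℝ)
    (hu : ∀ i, Differentiable ℝ (u i)) (hv : ∀ i, Differentiable ℝ (v i))
    (c : ℝ) (γ : Fin n) (θ : Fin n → ℝ) :
    pder γ (fun θ' => c * ∑ i, u i θ' * v i θ') θ =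
      c * ∑ i, (pder γ (u i) θ * v i θ + u i θ * pder γ (v i) θ) := by
  unfold pder
  rw [fderiv_const_mul (by exact (Differentiable.fun_sum (fun i _ => (hu i).mul (hv i))).differentiableAt)]
  rw [fderiv_fun_sum (A := fun i θ' => u i θ' * v i θ') (fun i _ => ((hu i).mul (hv i)).differentiableAt)]
  simp only [ContinuousLinearMap.smul_apply, ContinuousLinearMap.sum_apply, smul_eq_mul]
  congr 1
  apply Finset.sum_congr rfl
  intro i _
  rw [fderiv_fun_mul ((hu i).differentiableAt) ((hv i).differentiableAt)]
  simp only [ContinuousLinearMap.add_apply, ContinuousLinearMap.smul_apply, smul_eq_mul]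
  ring

/-- Proposition 2 (squared loss): Levi-Civita connection of the Fisher metric of a
Gaussian output model with mean `y(θ)` and variance `σ²`. -/
theorem connection_gaussian_model {n o : ℕ}
    (y : (Fin n → ℝ) → Fin o → ℝ) (hy : ∀ i, ContDiff ℝ (⊤ : ℕ∞) fun θ => y θ i)
    (σ : ℝ) (hσ : 0 < σ)
    (g : Fin n → Fin n → (Fin n → ℝ) → ℝ)
    (hg : ∀ μ ν θ, g μ ν θ =
      (1 / σ ^ 2) * ∑ i, pder μ (fun θ' => y θ' i) θ * pder ν (fun θ' => y θ' i) θ)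
    (θ : Fin n → ℝ) (ginv : Fin n → Fin n → ℝ)
    (hginv : ∀ μ α, ∑ κ, ginv μ κ * g κ α θ = if μ = α then 1 else 0)
    (μ α β : Fin n) :
    (1 / 2) * ∑ κ, ginv μ κ *
        (pder α (g κ β) θ + pder β (g κ α) θ - pder κ (g α β) θ) =
    (1 / σ ^ 2) * ∑ i, ∑ κ, ginv μ κ * (pder κ (fun θ' => y θ' i) θ *
        pder α (fun θ' => pder β (fun θ'' => y θ'' i) θ') θ) := by
  have key : ∀ γ δ ε : Fin n, pder γ (g δ ε) θ =
      (1 / σ ^ 2) * ∑ i, (pder γ (pder δ (fun θ' => y θ' i)) θ * pder ε (fun θ' => y θ' i) θ +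
        pder δ (fun θ' => y θ' i) θ * pder γ (pder ε (fun θ' => y θ' i)) θ) := by
    intro γ δ ε
    have : g δ ε = fun θ' => (1 / σ ^ 2) *
        ∑ i, pder δ (fun θ'' => y θ'' i) θ' * pder ε (fun θ'' => y θ'' i) θ' :=
      funext fun θ' => hg δ ε θ'
    rw [this, pder_expand _ _ (fun i => pder_diff (hy i) δ) (fun i => pder_diff (hy i) ε)]
  have hbr : ∀ κ : Fin n,
      pder α (g κ β) θ + pder β (g κ α) θ - pder κ (g α β) θ =
      (2 / σ ^ 2) * ∑ i, pder κ (fun θ' => y θ' i) θ *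
        pder α (fun θ' => pder β (fun θ'' => y θ'' i) θ') θ := by
    intro κ
    rw [key, key, key, ← mul_add, ← mul_sub, ← Finset.sum_add_distrib, ← Finset.sum_sub_distrib,
      Finset.mul_sum, Finset.mul_sum]
    apply Finset.sum_congr rfl
    intro i _
    rw [pder_symm (hy i) κ α θ, pder_symm (hy i) κ β θ, pder_symm (hy i) β α θ]
    ring
  simp only [hbr]
  rw [Finset.sum_comm]
  simp only [Finset.mul_sum]
  apply Finset.sum_congr rfl
  intro κ _
  apply Finset.sum_congr rfl
  intro i _
  ring
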